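/- Let 𝕋 = ℝ/ℤ and let U : 𝕋 → ℝ be smooth. Define the maps f(U) := U_{4x} and g(U) := U_{3x} + 6 U U_x on C^∞(𝕋,ℝ). Then their Lie bracket satisfies [f, g](U) = 60 U_{2x} U_{3x} + 24 U_x U_{4x}. -/

import Mathlib

/-- The map `f(U) = U_{4x}`. -/
noncomputable def opf (F : ℝ → ℝ) : ℝ → ℝ := fun x => iteratedDeriv 4 F x

/-- The KdV map `g(U) = U_{3x} + 6 U U_x`. -/
noncomputable def opg (F : ℝ → ℝ) : ℝ → ℝ := fun x =>
  iteratedDeriv 3 F x + 6 * F x * deriv F x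

/-- Abbreviation for iterated derivatives. -/
noncomputable def DD (U : ℝ → ℝ) (k : ℕ) : ℝ → ℝ := iteratedDeriv k U

lemma aux_lin : ∀ (n : ℕ) (f g : ℝ → ℝ), ContDiff ℝ (⊤ : ℕ∞) f → ContDiff ℝ (⊤ : ℕ∞) g →
    ∀ (c x : ℝ),
    iteratedDeriv n (fun y => f y + c * g y) x = iteratedDeriv n f x + c * iteratedDeriv n g x := by
  have hle : (1 : WithTop ℕ∞) ≤ ((⊤ : ℕ∞) : WithTop ℕ∞) := by exact_mod_cast le_top
  intro n
  induction n with
  | zero => intro f g hf hg c x; simp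
  | succ n ih =>
    intro f g hf hg c x
    have hd : deriv (fun y => f y + c * g y) = fun y => deriv f y + c * deriv g y := by
      funext y
      exact (((hf.differentiable (lt_of_lt_of_le zero_lt_one hle).ne').differentiableAt.hasDerivAt).add
        (((hg.differentiable (lt_of_lt_of_le zero_lt_one hle).ne').differentiableAt.hasDerivAt).const_mul c)).deriv
    rw [iteratedDeriv_succ', hd, ih _ _ (contDiff_infty_iff_deriv.mp hf).2
      (contDiff_infty_iff_deriv.mp hg).2, ← iteratedDeriv_succ', ← iteratedDeriv_succ']

/-- The Lie bracket `[f,g](U)` of `f(U) = U_{4x}` and `g(U) = U_{3x} + 6UU_x`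
equals `60 U_{2x} U_{3x} + 24 U_x U_{4x}`. -/
theorem stmt_16 (U : ℝ → ℝ) (hU : ContDiff ℝ (⊤ : ℕ∞) U) (hper : Function.Periodic U 1) :
    ∀ x : ℝ,
      HasDerivAt (fun ε : ℝ =>
          opf (fun y => U y + ε * opg U y) x - opg (fun y => U y + ε * opf U y) x)
        (60 * iteratedDeriv 2 U x * iteratedDeriv 3 U x
          + 24 * deriv U x * iteratedDeriv 4 U x) 0 := by
  intro x
  have hle : (1 : WithTop ℕ∞) ≤ ((⊤ : ℕ∞) : WithTop ℕ∞) := by exact_mod_cast le_top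
  have hU' : ContDiff ℝ (⊤ : ℕ∞) U := hU.of_le (by simp)
  have hDk : ∀ k : ℕ, ContDiff ℝ (⊤ : ℕ∞) (DD U k) := by
    intro k; rw [DD, iteratedDeriv_eq_iterate]; exact hU'.iterate_deriv k
  have hD : ∀ (k : ℕ) (y : ℝ), HasDerivAt (DD U k) (DD U (k + 1) y) y := by
    intro k y
    have h := (((hDk k).differentiable (lt_of_lt_of_le zero_lt_one hle).ne').differentiableAt (x := y)).hasDerivAt
    have : DD U (k + 1) y = deriv (DD U k) y := by rw [DD, DD, iteratedDeriv_succ]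
    rwa [this]
  have hmul : ∀ (i j : ℕ) (y : ℝ),
      HasDerivAt (fun z => DD U i z * DD U j z)
        (DD U (i + 1) y * DD U j y + DD U i y * DD U (j + 1) y) y :=
    fun i j y => (hD i y).mul (hD j y)
  have hG6 : ContDiff ℝ (⊤ : ℕ∞) (fun y => 6 * U y * deriv U y) := by
    have h1 : ContDiff ℝ (⊤ : ℕ∞) (deriv U) := (contDiff_infty_iff_deriv.mp hU').2
    exact (contDiff_const.mul hU').mul h1
  have hF : ContDiff ℝ (⊤ : ℕ∞) (opf U) := hDk 4
  have hG : ContDiff ℝ (⊤ : ℕ∞) (opg U) := by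
    have h : opg U = fun y => DD U 3 y + 1 * (6 * U y * deriv U y) := by
      funext y; simp [opg, DD]
    rw [h]
    exact (hDk 3).add (contDiff_const.mul hG6)
  have hU1 : deriv U = DD U 1 := iteratedDeriv_one.symm
  -- stepwise Leibniz for 6 U U_x
  have s1 : deriv (fun y => 6 * U y * deriv U y) =
      fun y => 6 * (DD U 1 y * DD U 1 y + DD U 0 y * DD U 2 y) := by
    funext y
    have h0 : (fun y => 6 * U y * deriv U y) = fun y => 6 * (DD U 0 y * DD U 1 y) := by
      funext z
      rw [hU1]
      show 6 * U z * DD U 1 z = 6 * (DD U 0 z * DD U 1 z)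
      rw [show DD U 0 z = U z from by rw [DD, iteratedDeriv_zero]]
      ring
    rw [h0]
    exact ((hmul 0 1 y).const_mul 6).deriv
  have s2 : deriv (fun y => 6 * (DD U 1 y * DD U 1 y + DD U 0 y * DD U 2 y)) =
      fun y => 6 * ((DD U 2 y * DD U 1 y + DD U 1 y * DD U 2 y)
        + (DD U 1 y * DD U 2 y + DD U 0 y * DD U 3 y)) := by
    funext y; exact (((hmul 1 1 y).add (hmul 0 2 y)).const_mul 6).deriv
  have s3 : deriv (fun y => 6 * ((DD U 2 y * DD U 1 y + DD U 1 y * DD U 2 y)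
        + (DD U 1 y * DD U 2 y + DD U 0 y * DD U 3 y))) =
      fun y => 6 * (((DD U 3 y * DD U 1 y + DD U 2 y * DD U 2 y)
          + (DD U 2 y * DD U 2 y + DD U 1 y * DD U 3 y))
        + ((DD U 2 y * DD U 2 y + DD U 1 y * DD U 3 y)
          + (DD U 1 y * DD U 3 y + DD U 0 y * DD U 4 y))) := by
    funext y
    exact ((((hmul 2 1 y).add (hmul 1 2 y)).add
      ((hmul 1 2 y).add (hmul 0 3 y))).const_mul 6).deriv
  have s4 : deriv (fun y => 6 * (((DD U 3 y * DD U 1 y + DD U 2 y * DD U 2 y)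
          + (DD U 2 y * DD U 2 y + DD U 1 y * DD U 3 y))
        + ((DD U 2 y * DD U 2 y + DD U 1 y * DD U 3 y)
          + (DD U 1 y * DD U 3 y + DD U 0 y * DD U 4 y)))) =
      fun y => 6 * ((((DD U 4 y * DD U 1 y + DD U 3 y * DD U 2 y)
            + (DD U 3 y * DD U 2 y + DD U 2 y * DD U 3 y))
          + ((DD U 3 y * DD U 2 y + DD U 2 y * DD U 3 y)
            + (DD U 2 y * DD U 3 y + DD U 1 y * DD U 4 y)))
        + (((DD U 3 y * DD U 2 y + DD U 2 y * DD U 3 y)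
            + (DD U 2 y * DD U 3 y + DD U 1 y * DD U 4 y))
          + ((DD U 2 y * DD U 3 y + DD U 1 y * DD U 4 y)
            + (DD U 1 y * DD U 4 y + DD U 0 y * DD U 5 y)))) := by
    funext y
    exact (((((hmul 3 1 y).add (hmul 2 2 y)).add ((hmul 2 2 y).add (hmul 1 3 y))).add
      (((hmul 2 2 y).add (hmul 1 3 y)).add
        ((hmul 1 3 y).add (hmul 0 4 y)))).const_mul 6).deriv
  have hLeib : iteratedDeriv 4 (fun y => 6 * U y * deriv U y) x =
      6 * (DD U 0 x * DD U 5 x + 5 * (DD U 1 x * DD U 4 x) + 10 * (DD U 2 x * DD U 3 x)) := by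
    have e : iteratedDeriv 4 (fun y => 6 * U y * deriv U y) x
        = deriv (deriv (deriv (deriv (fun y => 6 * U y * deriv U y)))) x := by
      rw [iteratedDeriv_eq_iterate]; rfl
    rw [e, s1, s2, s3, s4]; ring
  have hGval : iteratedDeriv 4 (opg U) x =
      DD U 7 x + 6 * (DD U 0 x * DD U 5 x + 5 * (DD U 1 x * DD U 4 x)
        + 10 * (DD U 2 x * DD U 3 x)) := by
    have h1 : (opg U) = fun y => iteratedDeriv 3 U y + 1 * (6 * U y * deriv U y) := by
      funext y; simp [opg]
    rw [h1, aux_lin 4 (fun y => iteratedDeriv 3 U y) (fun y => 6 * U y * deriv U y) (hDk 3) hG6 1 x, hLeib]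
    have h2 : iteratedDeriv 4 (iteratedDeriv 3 U) x = DD U 7 x := by
      rw [DD, iteratedDeriv_eq_iterate, iteratedDeriv_eq_iterate, iteratedDeriv_eq_iterate,
        ← Function.iterate_add_apply]
    rw [h2]; ring
  have hFval : iteratedDeriv 3 (opf U) x = DD U 7 x := by
    show iteratedDeriv 3 (fun y => iteratedDeriv 4 U y) x = DD U 7 x
    rw [DD, iteratedDeriv_eq_iterate, iteratedDeriv_eq_iterate, iteratedDeriv_eq_iterate]
    rfl
  -- rewrite the ε-function as an explicit polynomial in ε
  have key : (fun ε : ℝ =>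
        opf (fun y => U y + ε * opg U y) x - opg (fun y => U y + ε * opf U y) x) =
      fun ε : ℝ => (DD U 4 x + ε * iteratedDeriv 4 (opg U) x)
        - ((DD U 3 x + ε * DD U 7 x)
          + 6 * (DD U 0 x + ε * DD U 4 x) * (DD U 1 x + ε * DD U 5 x)) := by
    funext ε
    have e1 : opf (fun y => U y + ε * opg U y) x
        = DD U 4 x + ε * iteratedDeriv 4 (opg U) x := by
      show iteratedDeriv 4 (fun y => U y + ε * opg U y) x = _
      rw [aux_lin 4 U (opg U) hU' hG ε x]; rfl
    have hderivsum : deriv (fun y => U y + ε * opf U y) x = DD U 1 x + ε * DD U 5 x := by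
      have hUd : HasDerivAt U (DD U 1 x) x := by
        have := hD 0 x
        rwa [show DD U 0 = U from by rw [DD, iteratedDeriv_zero]] at this
      exact (hUd.add ((hD 4 x).const_mul ε)).deriv
    have e2 : opg (fun y => U y + ε * opf U y) x =
        (DD U 3 x + ε * DD U 7 x)
          + 6 * (DD U 0 x + ε * DD U 4 x) * (DD U 1 x + ε * DD U 5 x) := by
      show iteratedDeriv 3 (fun y => U y + ε * opf U y) x
        + 6 * (U x + ε * opf U x) * deriv (fun y => U y + ε * opf U y) x = _
      rw [aux_lin 3 U (opf U) hU' hF ε x, hFval, hderivsum,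
        show opf U x = DD U 4 x from rfl,
        show iteratedDeriv 3 U x = DD U 3 x from rfl,
        show U x = DD U 0 x from by rw [DD, iteratedDeriv_zero]]
      try ring
    rw [e1, e2]
  rw [key]
  have h1 : HasDerivAt (fun ε : ℝ => DD U 4 x + ε * iteratedDeriv 4 (opg U) x)
      (iteratedDeriv 4 (opg U) x) 0 := by
    simpa using ((hasDerivAt_id (0:ℝ)).mul_const (iteratedDeriv 4 (opg U) x)).const_add (DD U 4 x)
  have h2 : HasDerivAt (fun ε : ℝ => DD U 3 x + ε * DD U 7 x) (DD U 7 x) 0 := by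
    simpa using ((hasDerivAt_id (0:ℝ)).mul_const (DD U 7 x)).const_add (DD U 3 x)
  have ha : HasDerivAt (fun ε : ℝ => DD U 0 x + ε * DD U 4 x) (DD U 4 x) 0 := by
    simpa using ((hasDerivAt_id (0:ℝ)).mul_const (DD U 4 x)).const_add (DD U 0 x)
  have hb : HasDerivAt (fun ε : ℝ => DD U 1 x + ε * DD U 5 x) (DD U 5 x) 0 := by
    simpa using ((hasDerivAt_id (0:ℝ)).mul_const (DD U 5 x)).const_add (DD U 1 x)
  refine (h1.sub (h2.add ((ha.const_mul 6).mul hb))).congr_deriv ?_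
  rw [hGval, hU1,
    show iteratedDeriv 2 U x = DD U 2 x from rfl,
    show iteratedDeriv 3 U x = DD U 3 x from rfl,
    show iteratedDeriv 4 U x = DD U 4 x from rfl]
  try ring
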